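/- arXiv:1310.0177 — 8 statements merged into one kernel-verified Lean document; each statement's English description precedes it below -/
import Mathlib

section
/- Consider the multiplicative price update algorithm on m goods each of supply b: initial uniform price p_0, update factor r > 1, processing bidders in a fixed order and allocating to each bidder i the set S_i in her demand collection of maximum value among sets S with v_i(S) >= sum of current prices of goods in S, then multiplying the prices of goods in S_i by r. If mu satisfies mu/2 <= v_max < mu and p_0 * r^b = mu, then the produced allocation assigns at most b copies of each good. -/
/-!
A bidder who receives good `e` values her set at least at the current price `p₀ * r ^ load` of `e`,
so `p₀ * r ^ load ≤ v_max < μ = p₀ * r ^ b` and fewer than `b` earlier bidders hold `e`. Applied to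
the last holder of `e`, this bounds the number of copies by `b`.
-/

open scoped BigOperators

/-- Number of copies of good `e` allocated to bidders preceding `i`. -/
def load {U : Type} [DecidableEq U] {n : ℕ} (S : Fin n → Finset U)
    (i : Fin n) (e : U) : ℕ :=
  (Finset.univ.filter fun j : Fin n => j < i ∧ e ∈ S j).card

theorem Finset.card_le_of_forall_card_filter_lt_lt {α : Type*} [LinearOrder α] {F : Finset α}
    {b : ℕ} (h : ∀ j ∈ F, (F.filter (· < j)).card < b) : F.card ≤ b := by
  rcases F.eq_empty_or_nonempty with rfl | hF
  · simp
  have hmax : F.filter (· < F.max' hF) = F.erase (F.max' hF) := by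
    ext x
    simp only [mem_filter, mem_erase]
    exact ⟨fun ⟨hx, hlt⟩ => ⟨hlt.ne, hx⟩, fun ⟨hne, hx⟩ => ⟨hx, lt_of_le_of_ne (F.le_max' x hx) hne⟩⟩
  have := h _ (F.max'_mem hF)
  rw [hmax, card_erase_of_mem (F.max'_mem hF)] at this
  omega

theorem load_eq_card_filter_lt {U : Type} [DecidableEq U] {n : ℕ} (S : Fin n → Finset U)
    (i : Fin n) (e : U) :
    load S i e = ((Finset.univ.filter fun j : Fin n => e ∈ S j).filter (· < i)).card := by
  simp only [load, Finset.filter_filter, and_comm]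

theorem multiplicativePriceUpdate_feasible_general {U : Type} [DecidableEq U] {n : ℕ}
    (v : Fin n → Finset U → ℝ)        -- valuations
    (S : Fin n → Finset U)            -- the sets allocated by the algorithm
    (p₀ r μ vmax : ℝ) (b : ℕ)
    (hp₀ : 0 < p₀) (hr : 1 < r)
    (hvmax : ∀ i T, v i T ≤ vmax)
    (hμ₂ : vmax < μ)
    (hpr : p₀ * r ^ b = μ)
    -- each allocated (nonempty) set has valuation at least the sum of the
    -- current prices of its goods:
    (halg : ∀ i : Fin n, S i ≠ ∅ →
      (∑ e ∈ S i, p₀ * r ^ load S i e) ≤ v i (S i)) :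
    ∀ e : U, (Finset.univ.filter fun j : Fin n => e ∈ S j).card ≤ b := by
  intro e
  refine Finset.card_le_of_forall_card_filter_lt_lt fun i hi => ?_
  rw [← load_eq_card_filter_lt]
  have he : e ∈ S i := (Finset.mem_filter.1 hi).2
  have hprice : p₀ * r ^ load S i e ≤ v i (S i) :=
    (Finset.single_le_sum (fun _ _ => by positivity) he).trans (halg i (Finset.ne_empty_of_mem he))
  have hpow : r ^ load S i e < r ^ b :=
    lt_of_mul_lt_mul_left (by linarith [hvmax i (S i)]) hp₀.le
  exact (pow_lt_pow_iff_right₀ hr).1 hpow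

theorem multiplicativePriceUpdate_feasible {U : Type} [DecidableEq U] {n : ℕ}
    (v : Fin n → Finset U → ℝ)        -- valuations
    (S : Fin n → Finset U)            -- the sets allocated by the algorithm
    (p₀ r μ vmax : ℝ) (b : ℕ)
    (hp₀ : 0 < p₀) (hr : 1 < r)
    (hvmax : ∀ i T, v i T ≤ vmax)
    (hμ₁ : μ / 2 ≤ vmax) (hμ₂ : vmax < μ)
    (hpr : p₀ * r ^ b = μ)
    -- each allocated (nonempty) set has valuation at least the sum of the
    -- current prices of its goods:
    (halg : ∀ i : Fin n, S i ≠ ∅ →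
      (∑ e ∈ S i, p₀ * r ^ load S i e) ≤ v i (S i)) :
    ∀ e : U, (Finset.univ.filter fun j : Fin n => e ∈ S j).card ≤ b :=
  multiplicativePriceUpdate_feasible_general v S p₀ r μ vmax b hp₀ hr hvmax hμ₂ hpr halg
end

section
/- For the multiplicative price update algorithm with supply b per good, the social welfare of the produced allocation satisfies v(S) >= OPT - b * sum over goods e of p_e^*, where OPT is the optimal social welfare of a feasible allocation and p_e^* is the final price of good e. -/
/-!
Every price only grows while the algorithm runs, so bidder `i` faced prices at most the final
prices `p_e^*`. If the optimal bundle `T i` was affordable at the moment `i` was served, the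
algorithm gave `i` something at least as valuable; otherwise `v i (T i)` is below its price.
Either way `v i (T i) ≤ v i (S i) + ∑_{e ∈ T i} p_e^*`. Summing over bidders, each good `e`
is counted once per bidder holding it in `T`, i.e. at most `b` times.
-/

open scoped BigOperators

/-- Total number of copies of good `e` allocated. -/
def totalLoad {U : Type} [DecidableEq U] {n : ℕ} (S : Fin n → Finset U)
    (e : U) : ℕ :=
  (Finset.univ.filter fun j : Fin n => e ∈ S j).card

open Finset

lemma load_le_totalLoad {U : Type} [DecidableEq U] {n : ℕ} (S : Fin n → Finset U)
    (i : Fin n) (e : U) : load S i e ≤ totalLoad S e :=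
  card_le_card <| monotone_filter_right _ fun _ _ => And.right

lemma le_add_of_imp_le {R : Type*} [AddCommMonoid R] [LinearOrder R] [IsOrderedAddMonoid R]
    {a x y : R} (h : a ≤ x → x ≤ y) (ha : 0 ≤ a) (hy : 0 ≤ y) : x ≤ y + a := by
  rcases le_total a x with hax | hxa
  · exact (h hax).trans (le_add_of_nonneg_right ha)
  · exact hxa.trans (le_add_of_nonneg_left hy)

lemma sum_sum_le_mul_sum_of_card_filter_le {ι α R : Type*} [Fintype ι] [Fintype α]
    [DecidableEq α] [Semiring R] [PartialOrder R] [IsOrderedRing R]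
    (T : ι → Finset α) (f : α → R) (hf : ∀ e, 0 ≤ f e) (b : ℕ)
    (hb : ∀ e, #{i | e ∈ T i} ≤ b) :
    ∑ i, ∑ e ∈ T i, f e ≤ b * ∑ e, f e := by
  calc ∑ i, ∑ e ∈ T i, f e = ∑ e, ∑ i ∈ {i | e ∈ T i}, f e :=
        sum_comm' fun i e => by simp
    _ = ∑ e, (#{i | e ∈ T i} : R) * f e := by simp only [sum_const, nsmul_eq_mul]
    _ ≤ ∑ e, (b : R) * f e :=
        sum_le_sum fun e _ => mul_le_mul_of_nonneg_right (Nat.mono_cast (hb e)) (hf e)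
    _ = b * ∑ e, f e := (mul_sum ..).symm

theorem multiplicativePriceUpdate_welfare_ge_opt_general
    {U : Type} [Fintype U] [DecidableEq U] {n : ℕ}
    (𝒮 : Fin n → Finset (Finset U))   -- demanded collections
    (v : Fin n → Finset U → ℝ) (S : Fin n → Finset U)
    (p₀ r : ℝ) (b : ℕ) (hp₀ : 0 < p₀) (hr : 1 < r)
    -- the algorithm allocates to each bidder a most valuable demanded set among
    -- those whose valuation is at least the sum of the current prices:
    (hmax : ∀ (i : Fin n) (T : Finset U), T ∈ 𝒮 i →
      (∑ e ∈ T, p₀ * r ^ load S i e) ≤ v i T → v i T ≤ v i (S i))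
    (hS : ∀ i, 0 ≤ v i (S i))
    -- an (optimal) feasible allocation `T`:
    (T : Fin n → Finset U) (hT : ∀ i, T i ∈ 𝒮 i)
    (hTfeas : ∀ e : U, (Finset.univ.filter fun j : Fin n => e ∈ T j).card ≤ b) :
    (∑ i, v i (T i)) - b * (∑ e : U, p₀ * r ^ totalLoad S e)
      ≤ ∑ i, v i (S i) := by
  have hprice_nonneg : ∀ k : ℕ, 0 ≤ p₀ * r ^ k := fun k => by positivity
  have hprice_le_final : ∀ i e, p₀ * r ^ load S i e ≤ p₀ * r ^ totalLoad S e := fun i e =>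
    mul_le_mul_of_nonneg_left (pow_le_pow_right₀ hr.le (load_le_totalLoad S i e)) hp₀.le
  have hbidder :
      ∀ i, v i (T i) ≤ v i (S i) + ∑ e ∈ T i, p₀ * r ^ totalLoad S e := fun i =>
    calc v i (T i) ≤ v i (S i) + ∑ e ∈ T i, p₀ * r ^ load S i e :=
          le_add_of_imp_le (hmax i (T i) (hT i))
            (sum_nonneg fun e _ => hprice_nonneg _) (hS i)
      _ ≤ v i (S i) + ∑ e ∈ T i, p₀ * r ^ totalLoad S e :=
          add_le_add_right (sum_le_sum fun e _ => hprice_le_final i e) _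
  have hwelfare :
      ∑ i, v i (T i) ≤ ∑ i, v i (S i) + ∑ i, ∑ e ∈ T i, p₀ * r ^ totalLoad S e := by
    rw [← sum_add_distrib]
    exact sum_le_sum fun i _ => hbidder i
  have hcount := sum_sum_le_mul_sum_of_card_filter_le T (fun e => p₀ * r ^ totalLoad S e)
    (fun e => hprice_nonneg _) b hTfeas
  linarith

theorem multiplicativePriceUpdate_welfare_ge_opt
    {U : Type} [Fintype U] [DecidableEq U] {n : ℕ}
    (𝒮 : Fin n → Finset (Finset U))   -- demanded collections
    (v : Fin n → Finset U → ℝ) (S : Fin n → Finset U)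
    (p₀ r : ℝ) (b : ℕ) (hp₀ : 0 < p₀) (hr : 1 < r)
    (hv : ∀ i T, 0 ≤ v i T)
    -- the algorithm allocates to each bidder a most valuable demanded set among
    -- those whose valuation is at least the sum of the current prices:
    (hmax : ∀ (i : Fin n) (T : Finset U), T ∈ 𝒮 i →
      (∑ e ∈ T, p₀ * r ^ load S i e) ≤ v i T → v i T ≤ v i (S i))
    (hS : ∀ i, 0 ≤ v i (S i))
    -- an (optimal) feasible allocation `T`:
    (T : Fin n → Finset U) (hT : ∀ i, T i ∈ 𝒮 i)
    (hTfeas : ∀ e : U, (Finset.univ.filter fun j : Fin n => e ∈ T j).card ≤ b) :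
    (∑ i, v i (T i)) - b * (∑ e : U, p₀ * r ^ totalLoad S e)
      ≤ ∑ i, v i (S i) :=
  multiplicativePriceUpdate_welfare_ge_opt_general 𝒮 v S p₀ r b hp₀ hr hmax hS T hT hTfeas
end

section
/- The multiplicative price update algorithm (Algorithm 1, with a fixed bid-independent order of bidders and fixed initial prices) is k-set monotone, and hence truthful without money and with verification for combinatorial auctions with unknown k-minded bidders. -/
open scoped BigOperators

structure Decl (U : Type) [DecidableEq U] where
  sets : Finset (Finset U)
  val : Finset U → NNReal

variable {U ι : Type} [DecidableEq U] [DecidableEq ι]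

/-- `evalOn d T = d.val (σ(T|d))`: `d`'s valuation of an awarded set `T`. -/
def evalOn (d : Decl U) (T : Finset U) : NNReal :=
  (d.sets.filter (· ⊆ T)).sup d.val

def alloc (A : (ι → Decl U) → ι → Finset U)
    (bs : ι → Decl U) (i : ι) (d : Decl U) : Finset U :=
  A (Function.update bs i d) i

/-- Truthfulness without money and with verification. -/
def Truthful (A : (ι → Decl U) → ι → Finset U) : Prop :=
  ∀ (i : ι) (bs : ι → Decl U) (t z : Decl U),
    evalOn z (alloc A bs i z) ≤ evalOn t (alloc A bs i z) →
    evalOn t (alloc A bs i z) ≤ evalOn t (alloc A bs i t)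

/-- k-set monotonicity. -/
def KSetMonotone (A : (ι → Decl U) → ι → Finset U) : Prop :=
  ∀ (i : ι) (bs : ι → Decl U) (a b : Decl U),
    evalOn a (alloc A bs i a) ≤ evalOn b (alloc A bs i a) →
    evalOn b (alloc A bs i a) ≤ evalOn b (alloc A bs i b)

/-!
The prices bidder `i` faces do not depend on her declaration. If declaring `a` wins a set `T₀`
whose price is covered by its value, and `b` values `T₀` at least as much, then `b`'s most
valuable demanded subset `U₀ ⊆ T₀` costs at most the price of `T₀`, hence at most `b(U₀)`. So `U₀`
is a candidate when `i` declares `b`, and the set she then wins is worth at least `b(U₀)` to `b`.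
-/

theorem val_le_evalOn {d : Decl U} {T : Finset U} (hT : T ∈ d.sets) : d.val T ≤ evalOn d T :=
  Finset.le_sup (Finset.mem_filter.mpr ⟨hT, subset_rfl⟩)

theorem exists_val_eq_evalOn {d : Decl U} {T : Finset U} (h : evalOn d T ≠ 0) :
    ∃ V ∈ d.sets, V ⊆ T ∧ d.val V = evalOn d T := by
  have hne : (d.sets.filter (· ⊆ T)).Nonempty := by
    by_contra hemp
    exact h (by simp [evalOn, Finset.not_nonempty_iff_eq_empty.mp hemp])
  obtain ⟨V, hV, hsup⟩ := Finset.exists_mem_eq_sup _ hne d.val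
  exact ⟨V, (Finset.mem_filter.mp hV).1, (Finset.mem_filter.mp hV).2, hsup.symm⟩

theorem sum_le_evalOn {d : Decl U} {p : U → NNReal} {T : Finset U}
    (hT : T ∈ d.sets ∨ T = ∅) (hp : T ∈ d.sets → ∑ e ∈ T, p e ≤ d.val T) :
    ∑ e ∈ T, p e ≤ evalOn d T := by
  rcases hT with hT | rfl
  · exact (hp hT).trans (val_le_evalOn hT)
  · simp

theorem evalOn_le_of_forall_clearing {b : Decl U} {p : U → NNReal} {T S : Finset U}
    (hT : ∑ e ∈ T, p e ≤ evalOn b T)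
    (hS : ∀ V ∈ b.sets, ∑ e ∈ V, p e ≤ b.val V → b.val V ≤ evalOn b S) :
    evalOn b T ≤ evalOn b S := by
  by_cases h0 : evalOn b T = 0
  · simp [h0]
  obtain ⟨V, hVb, hVT, hV⟩ := exists_val_eq_evalOn h0
  have hclear : ∑ e ∈ V, p e ≤ b.val V :=
    calc ∑ e ∈ V, p e ≤ ∑ e ∈ T, p e := Finset.sum_le_sum_of_subset hVT
      _ ≤ evalOn b T := hT
      _ = b.val V := hV.symm
  exact hV ▸ hS V hVb hclear

theorem KSetMonotone.truthful {A : (ι → Decl U) → ι → Finset U} (h : KSetMonotone A) :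
    Truthful A :=
  fun i bs t z => h i bs z t

theorem multiplicativePriceUpdate_truthful
    (A : (ι → Decl U) → ι → Finset U)
    (price : (ι → Decl U) → ι → U → NNReal)  -- prices seen by each bidder
    -- the prices offered to bidder `i` do not depend on `i`'s own declaration
    -- (the processing order is fixed and bid-independent):
    (hPriceIndep : ∀ (bs : ι → Decl U) (i : ι) (d d' : Decl U),
      price (Function.update bs i d) i = price (Function.update bs i d') i)
    -- exactness:
    (hExact : ∀ bs i, A bs i ∈ (bs i).sets ∨ A bs i = ∅)
    -- the allocated set is above its threshold:
    (hAlloc : ∀ (bs : ι → Decl U) (i : ι), A bs i ∈ (bs i).sets →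
      (∑ e ∈ A bs i, price bs i e) ≤ (bs i).val (A bs i))
    -- and has maximum declared value among demanded sets above their threshold:
    (hMax : ∀ (bs : ι → Decl U) (i : ι) (T : Finset U), T ∈ (bs i).sets →
      (∑ e ∈ T, price bs i e) ≤ (bs i).val T →
      (bs i).val T ≤ evalOn (bs i) (A bs i)) :
    KSetMonotone A ∧ Truthful A := by
  have hmono : KSetMonotone A := by
    intro i bs a b hab
    have hwin : ∑ e ∈ alloc A bs i a, price (Function.update bs i a) i e
        ≤ evalOn a (alloc A bs i a) := by
      simpa only [alloc, Function.update_self] using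
        sum_le_evalOn (hExact (Function.update bs i a) i) (hAlloc (Function.update bs i a) i)
    refine evalOn_le_of_forall_clearing (p := price (Function.update bs i b) i) ?_ ?_
    · rw [← hPriceIndep bs i a b]
      exact hwin.trans hab
    · simpa only [alloc, Function.update_self] using hMax (Function.update bs i b) i
  exact ⟨hmono, hmono.truthful⟩
end

section
/- The greedy algorithm that processes all nk elementary bids (i, S, b_i(S)) in nonincreasing order of bid value and accepts a bid iff the bidder has not yet been served and the set S is disjoint from all previously accepted sets, achieves approximation ratio min{m, d+1} for the social welfare of combinatorial auctions with k-minded bidders, where d is the maximum cardinality of a demanded set and m the number of goods. -/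
/-!
Charge every bid `(i, B i)` of a feasible allocation `B` to the accepted greedy bid that
blocked it: bidder `i`'s own accepted bid, or an accepted bid whose set meets `B i`; in both
cases its value is at least `v i (B i)`. The sets `B i` charged to `A j` are pairwise disjoint
and nonempty, so there are at most `m` of them, and all but bidder `j`'s own meet `A j`, so
there are at most `|A j| + 1 ≤ d + 1` of them.
-/

open Finset

section

variable {ι κ R : Type*}

theorem Finset.sum_le_nsmul_sum_of_card_fiber_le [Fintype κ] [DecidableEq κ]
    [AddCommMonoid R] [PartialOrder R] [IsOrderedAddMonoid R]
    {s : Finset ι} {f : ι → κ} {a : ι → R} {w : κ → R} {K : ℕ}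
    (hw : ∀ j, 0 ≤ w j) (ha : ∀ i ∈ s, a i ≤ w (f i)) (hK : ∀ j, #{i ∈ s | f i = j} ≤ K) :
    ∑ i ∈ s, a i ≤ K • ∑ j, w j :=
  calc ∑ i ∈ s, a i
      ≤ ∑ i ∈ s, w (f i) := sum_le_sum ha
    _ = ∑ j, #{i ∈ s | f i = j} • w j := by simp_rw [← sum_fiberwise' s f w, sum_const]
    _ ≤ ∑ j, K • w j := sum_le_sum fun j _ => nsmul_le_nsmul_left (hw j) (hK j)
    _ = K • ∑ j, w j := (smul_sum ..).symm

variable {U : Type*} [DecidableEq U]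

theorem Finset.card_le_card_of_pairwiseDisjoint_of_not_disjoint {s : Finset ι}
    {B : ι → Finset U} {T : Finset U} (hB : (s : Set ι).PairwiseDisjoint B)
    (hT : ∀ i ∈ s, ¬Disjoint T (B i)) : #s ≤ #T :=
  calc #s
      ≤ #(s.biUnion fun i => T ∩ B i) :=
        card_le_card_biUnion (hB.mono fun _ => inf_le_right)
          fun i hi => not_disjoint_iff_nonempty_inter.1 (hT i hi)
    _ ≤ #T := card_le_card (biUnion_subset.2 fun _ _ => inter_subset_left)

theorem Finset.card_le_card_add_one_of_pairwiseDisjoint_of_not_disjoint [DecidableEq ι]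
    {s : Finset ι} {B : ι → Finset U} {T : Finset U} {j : ι}
    (hB : (s : Set ι).PairwiseDisjoint B) (hT : ∀ i ∈ s, i ≠ j → ¬Disjoint T (B i)) :
    #s ≤ #T + 1 := by
  have hrest : #(s.erase j) ≤ #T :=
    card_le_card_of_pairwiseDisjoint_of_not_disjoint (hB.subset (coe_subset.2 (erase_subset j s)))
      fun i hi => hT i (mem_of_mem_erase hi) (ne_of_mem_erase hi)
  have := pred_card_le_card_erase (s := s) (a := j)
  omega

end

theorem exists_greedy_blocker {U ι : Type*} {𝒮 : ι → Finset (Finset U)}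
    {v : ι → Finset U → NNReal} {A : ι → Finset U}
    (hgreedy : ∀ i T, T ∈ 𝒮 i → T ≠ A i →
      (∃ j, A j ≠ ∅ ∧ ¬ Disjoint (A j) T ∧ v i T ≤ v j (A j)) ∨
      (A i ∈ 𝒮 i ∧ v i T ≤ v i (A i)))
    {i : ι} {T : Finset U} (hT : T ∈ 𝒮 i) :
    ∃ j, v i T ≤ v j (A j) ∧ (j = i ∨ ¬Disjoint (A j) T) := by
  by_cases hTA : T = A i
  · exact ⟨i, hTA ▸ le_rfl, .inl rfl⟩
  rcases hgreedy i T hT hTA with ⟨j, -, hmeet, hle⟩ | ⟨-, hle⟩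
  · exact ⟨j, hle, .inr hmeet⟩
  · exact ⟨i, hle, .inl rfl⟩

open scoped BigOperators

theorem greedy_approximation_general
    {U ι : Type} [Fintype U] [DecidableEq U] [Fintype ι] [DecidableEq ι]
    (𝒮 : ι → Finset (Finset U))         -- demanded collections
    (v : ι → Finset U → NNReal)          -- bid values
    (d : ℕ)
    (hd : ∀ i S, S ∈ 𝒮 i → S.card ≤ d)
    (hv0 : ∀ i, v i ∅ = 0)
    (A : ι → Finset U)                    -- the greedy allocation
    (hexact : ∀ i, A i ∈ 𝒮 i ∨ A i = ∅)
    (hgreedy : ∀ i T, T ∈ 𝒮 i → T ≠ A i →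
      (∃ j, A j ≠ ∅ ∧ ¬ Disjoint (A j) T ∧ v i T ≤ v j (A j)) ∨
      (A i ∈ 𝒮 i ∧ v i T ≤ v i (A i))) :
    ∀ B : ι → Finset U, (∀ i, B i ∈ 𝒮 i ∨ B i = ∅) →
      (∀ i j, i ≠ j → Disjoint (B i) (B j)) →
      (∑ i, v i (B i)) ≤ ((min (Fintype.card U) (d + 1) : ℕ) : NNReal) * ∑ i, v i (A i) := by
  intro B hB hBdisj
  set s : Finset ι := {i | (B i).Nonempty}
  have hBs : ∀ i ∈ s, B i ∈ 𝒮 i := fun i hi =>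
    (hB i).resolve_right (mem_filter.1 hi).2.ne_empty
  have hAd : ∀ j, #(A j) ≤ d := fun j => (hexact j).elim (hd j _) fun h => by simp [h]
  choose! f hf using fun i (hi : i ∈ s) => exists_greedy_blocker hgreedy (hBs i hi)
  have hB_fiber : ∀ j, (({i ∈ s | f i = j} : Finset ι) : Set ι).PairwiseDisjoint B :=
    fun _ _ _ _ _ hik => hBdisj _ _ hik
  have hfiber_m : ∀ j, #{i ∈ s | f i = j} ≤ Fintype.card U := fun j =>
    card_le_card_of_pairwiseDisjoint_of_not_disjoint (T := univ) (hB_fiber j) fun i hi => by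
      simpa [s, not_disjoint_iff_nonempty_inter] using (mem_filter.1 hi).1
  have hfiber_d : ∀ j, #{i ∈ s | f i = j} ≤ d + 1 := by
    intro j
    refine (card_le_card_add_one_of_pairwiseDisjoint_of_not_disjoint (T := A j) (j := j)
      (hB_fiber j) fun i hi hij => ?_).trans (Nat.add_le_add_right (hAd j) 1)
    obtain ⟨his, rfl⟩ := mem_filter.1 hi
    exact (hf i his).2.resolve_left hij.symm
  calc ∑ i, v i (B i)
      = ∑ i ∈ s, v i (B i) :=
        (sum_subset (subset_univ s) fun i _ hi => by
          rw [not_nonempty_iff_eq_empty.1 fun h => hi (mem_filter.2 ⟨mem_univ i, h⟩), hv0]).symm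
    _ ≤ min (Fintype.card U) (d + 1) • ∑ j, v j (A j) :=
        sum_le_nsmul_sum_of_card_fiber_le (fun _ => zero_le) (fun i hi => (hf i hi).1)
          fun j => le_min (hfiber_m j) (hfiber_d j)
    _ = _ := nsmul_eq_mul ..

theorem greedy_approximation
    {U ι : Type} [Fintype U] [DecidableEq U] [Fintype ι] [DecidableEq ι]
    (𝒮 : ι → Finset (Finset U))         -- demanded collections
    (v : ι → Finset U → NNReal)          -- bid values
    (d : ℕ)
    (hd : ∀ i S, S ∈ 𝒮 i → S.card ≤ d)
    (hne : ∀ i S, S ∈ 𝒮 i → S ≠ ∅)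
    (hpos : ∀ i S, S ∈ 𝒮 i → 0 < v i S)  -- non-zero bids
    (hv0 : ∀ i, v i ∅ = 0)
    (A : ι → Finset U)                    -- the greedy allocation
    (hexact : ∀ i, A i ∈ 𝒮 i ∨ A i = ∅)
    (hdisj : ∀ i j, i ≠ j → Disjoint (A i) (A j))
    (hgreedy : ∀ i T, T ∈ 𝒮 i → T ≠ A i →
      (∃ j, A j ≠ ∅ ∧ ¬ Disjoint (A j) T ∧ v i T ≤ v j (A j)) ∨
      (A i ∈ 𝒮 i ∧ v i T ≤ v i (A i))) :
    ∀ B : ι → Finset U, (∀ i, B i ∈ 𝒮 i ∨ B i = ∅) →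
      (∀ i j, i ≠ j → Disjoint (B i) (B j)) →
      (∑ i, v i (B i)) ≤ ((min (Fintype.card U) (d + 1) : ℕ) : NNReal) * ∑ i, v i (A i) :=
  greedy_approximation_general 𝒮 v d hd hv0 A hexact hgreedy
end

section
/- There exist no payments that augment the greedy algorithm (nonincreasing bid order, accept a bid iff bidder unserved and set disjoint from accepted sets, ties broken toward smaller bidder index) to make a truthful mechanism with money for combinatorial auctions with k-minded bidders, even with known bidders. Concretely, for U = {a, b}, bidder 1 with demanded sets {a} and {b} and bidder 2 single-minded on {a} with value 1, the three valuation profiles v_1 = (1-delta, 0), v_1' = (1+delta, 1), v_1'' = (1-delta, 1-2*delta) for bidder 1 (values of {a} and {b} respectively, 0 < delta < 1/2) yield a cycle in bidder 1's declaration graph of total weight -(1-delta) + delta + 0 = -(1-2*delta) < 0. -/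
/-!
Payments `p` make an allocation rule truthful iff `p t - p d` is bounded by the weight of the edge
`t → d` of the declaration graph. Summed around a cycle the payments telescope away, so every cycle
has nonnegative weight. For bidder 1 the declarations `v₁ → v₁' → v₁'' → v₁` form a cycle of
weight `-(1 - δ) + δ + 0 = 2δ - 1 < 0`.
-/

section DeclarationGraph

variable {D O : Type*} (val : D → O → ℝ) (alloc : D → O)

def IsTruthfulWith (p : D → ℝ) : Prop :=
  ∀ t d, val t (alloc d) - p d ≤ val t (alloc t) - p t

def declarationWeight (a b : D) : ℝ :=
  val a (alloc a) - val a (alloc b)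

variable {val alloc}

theorem IsTruthfulWith.sub_le_declarationWeight {p : D → ℝ} (hp : IsTruthfulWith val alloc p)
    (a b : D) : p a - p b ≤ declarationWeight val alloc a b := by
  have := hp a b
  unfold declarationWeight
  linarith

theorem IsTruthfulWith.sum_declarationWeight_cycle_nonneg {p : D → ℝ}
    (hp : IsTruthfulWith val alloc p) {n : ℕ} [NeZero n] (c : Fin n → D) :
    0 ≤ ∑ i, declarationWeight val alloc (c i) (c (i + 1)) := by
  have htelescope : ∑ i, (p (c i) - p (c (i + 1))) = 0 := by
    rw [Finset.sum_sub_distrib, sub_eq_zero]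
    exact (Fintype.sum_equiv (Equiv.addRight 1) _ _ fun _ => rfl).symm
  calc (0 : ℝ) = ∑ i, (p (c i) - p (c (i + 1))) := htelescope.symm
    _ ≤ _ := Finset.sum_le_sum fun i _ => hp.sub_le_declarationWeight _ _

end DeclarationGraph

theorem greedy_no_payments_general (δ : ℝ) (hδ : δ < 1 / 2)
    (alloc : ℝ × ℝ → Bool)
    (h₁ : alloc (1 - δ, 0) = false)
    (h₂ : alloc (1 + δ, 1) = true)
    (h₃ : alloc (1 - δ, 1 - 2 * δ) = false) :
    ¬ ∃ p : ℝ × ℝ → ℝ, ∀ t d : ℝ × ℝ,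
      (if alloc d then t.1 else t.2) - p d ≤ (if alloc t then t.1 else t.2) - p t := by
  rintro ⟨p, hp⟩
  have hcycle := IsTruthfulWith.sum_declarationWeight_cycle_nonneg
    (val := fun (t : ℝ × ℝ) (b : Bool) => if b then t.1 else t.2) (alloc := alloc) hp
    ![(1 - δ, 0), (1 + δ, 1), (1 - δ, 1 - 2 * δ)]
  simp only [Fin.sum_univ_three, declarationWeight, Fin.reduceAdd, Matrix.cons_val_zero,
    Matrix.cons_val_one, Matrix.cons_val, h₁, h₂, h₃, Bool.false_eq_true, ↓reduceIte] at hcycle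
  linarith

theorem greedy_no_payments (δ : ℝ) (hδ0 : 0 < δ) (hδ : δ < 1 / 2)
    (alloc : ℝ × ℝ → Bool)
    (h₁ : alloc (1 - δ, 0) = false)
    (h₂ : alloc (1 + δ, 1) = true)
    (h₃ : alloc (1 - δ, 1 - 2 * δ) = false) :
    ¬ ∃ p : ℝ × ℝ → ℝ, ∀ t d : ℝ × ℝ,
      (if alloc d then t.1 else t.2) - p d ≤ (if alloc t then t.1 else t.2) - p t :=
  greedy_no_payments_general δ hδ alloc h₁ h₂ h₃
end

section
/- No deterministic truthful mechanism without money with verification for combinatorial auctions with known 2-minded bidders achieves approximation ratio better than 2, even with n = 2 bidders and m = 2 goods and without any computational restriction. -/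
/-!
Let both bidders value good `0` at `1 + δ` and good `1` at `1`. Giving good `0` to one bidder and
good `1` to the other is worth `2 + δ`, while any allocation leaving a bidder empty-handed is worth
at most `1 + δ`; as `(2 + δ) / (1 + δ) > 2 - δ`, a `(2 - δ)`-approximation must give good `1` to
some bidder `i`. Now let `i` declare `1 + δ` for good `0` and `0` for good `1`. Verification makes
this lie admissible, and if it won `i` good `0` then `i` would gain `1 + δ > 1`, so truthfulness
leaves `i` with no declared value. The mechanism again earns at most `1 + δ` against `2 + δ`.
-/

open scoped BigOperators

/-- Valuation of an outcome: the declared value of the awarded good. -/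
def optVal (v : Fin 2 → NNReal) (o : Option (Fin 2)) : NNReal :=
  o.elim 0 v

/-- Truthfulness without money with verification (known bidders): a lie `z` is
allowed only if the value it declares for the awarded good does not exceed the
true value; then the truthful outcome must be worth at least as much. -/
def Truthful2 (A : (Fin 2 → Fin 2 → NNReal) → Fin 2 → Option (Fin 2)) : Prop :=
  ∀ (i : Fin 2) (bs : Fin 2 → Fin 2 → NNReal) (t z : Fin 2 → NNReal),
    optVal z (A (Function.update bs i z) i) ≤ optVal t (A (Function.update bs i z) i) →
    optVal t (A (Function.update bs i z) i) ≤ optVal t (A (Function.update bs i t) i)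

def Feasible (B : Fin 2 → Option (Fin 2)) : Prop :=
  ∀ i j, i ≠ j → B i ≠ none → B i ≠ B j

def welfare (bs : Fin 2 → Fin 2 → NNReal) (B : Fin 2 → Option (Fin 2)) : NNReal :=
  ∑ i, optVal (bs i) (B i)

def Approximates (A : (Fin 2 → Fin 2 → NNReal) → Fin 2 → Option (Fin 2)) (r : ℝ) : Prop :=
  ∀ bs B, Feasible B → (welfare bs B : ℝ) ≤ r * welfare bs (A bs)

lemma optVal_le_of_forall_le {v : Fin 2 → NNReal} {c : NNReal} (h : ∀ g, v g ≤ c) :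
    ∀ o, optVal v o ≤ c
  | none => zero_le
  | some g => h g

lemma Feasible.exists_eq_none_or_eq_some_one {B : Fin 2 → Option (Fin 2)} (hB : Feasible B) :
    (∃ i, B i = none) ∨ ∃ i, B i = some 1 := by
  by_contra! h
  have hB0 : ∀ i, B i = some 0 := fun i => by
    rcases hi : B i with _ | g
    · exact absurd hi (h.1 i)
    · fin_cases g
      · rfl
      · exact absurd hi (h.2 i)
  exact hB 0 1 (by decide) (by simp [hB0]) (by rw [hB0, hB0])

lemma welfare_le_of_optVal_eq_zero {bs : Fin 2 → Fin 2 → NNReal} {B : Fin 2 → Option (Fin 2)}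
    {c : NNReal} (i : Fin 2) (h0 : optVal (bs i) (B i) = 0) (hle : ∀ k g, bs k g ≤ c) :
    welfare bs B ≤ c := by
  have hle' k := optVal_le_of_forall_le (hle k) (B k)
  fin_cases i <;> simp_all [welfare, Fin.sum_univ_two]

def splitAlloc (i : Fin 2) (k : Fin 2) : Option (Fin 2) :=
  if k = i then some 0 else some 1

lemma feasible_splitAlloc : ∀ i, Feasible (splitAlloc i) := by
  unfold Feasible splitAlloc
  decide

lemma welfare_splitAlloc {bs : Fin 2 → Fin 2 → NNReal} {ε : NNReal} {i : Fin 2}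
    (h0 : bs i 0 = 1 + ε) (h1 : ∀ j, j ≠ i → bs j 1 = 1) :
    welfare bs (splitAlloc i) = 2 + ε := by
  obtain rfl | rfl : i = 0 ∨ i = 1 := by omega
  · simp [welfare, splitAlloc, Fin.sum_univ_two, optVal, h0, h1 1 (by decide)]
    ring
  · simp [welfare, splitAlloc, Fin.sum_univ_two, optVal, h0, h1 0 (by decide)]
    ring

lemma two_sub_mul_lt_two_add {δ s : ℝ} (hδ : 0 < δ) (hs0 : 0 ≤ s) (hs : s ≤ 1 + δ) :
    (2 - δ) * s < 2 + δ := by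
  rcases le_or_gt s 1 with hs1 | hs1 <;> nlinarith

lemma Approximates.one_add_lt_welfare {A : (Fin 2 → Fin 2 → NNReal) → Fin 2 → Option (Fin 2)}
    {ε : NNReal} (hA : Approximates A (2 - ε)) (hε : 0 < ε) {bs : Fin 2 → Fin 2 → NNReal}
    (i : Fin 2) (h0 : bs i 0 = 1 + ε) (h1 : ∀ j, j ≠ i → bs j 1 = 1) :
    1 + ε < welfare bs (A bs) := by
  by_contra! hle
  have hopt := hA bs (splitAlloc i) (feasible_splitAlloc i)
  rw [welfare_splitAlloc h0 h1] at hopt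
  have hle' : (welfare bs (A bs) : ℝ) ≤ 1 + ε := by exact_mod_cast hle
  push_cast at hopt
  exact (two_sub_mul_lt_two_add (by exact_mod_cast hε) (NNReal.coe_nonneg _) hle').not_ge hopt

def trueVal (ε : NNReal) : Fin 2 → NNReal := ![1 + ε, 1]

def lieVal (ε : NNReal) : Fin 2 → NNReal := ![1 + ε, 0]

lemma trueVal_le (ε : NNReal) (g : Fin 2) : trueVal ε g ≤ 1 + ε := by
  fin_cases g <;> simp [trueVal]

lemma lieVal_le (ε : NNReal) (g : Fin 2) : lieVal ε g ≤ 1 + ε := by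
  fin_cases g <;> simp [lieVal]

lemma optVal_lieVal_le_trueVal (ε : NNReal) : ∀ o, optVal (lieVal ε) o ≤ optVal (trueVal ε) o
  | none => le_rfl
  | some g => by fin_cases g <;> simp [optVal, lieVal, trueVal]

lemma optVal_lieVal_eq_zero_of_le_one {ε : NNReal} (hε : 0 < ε) :
    ∀ {o}, optVal (trueVal ε) o ≤ 1 → optVal (lieVal ε) o = 0
  | none, _ => rfl
  | some g, h => by fin_cases g <;> simp_all [optVal, lieVal, trueVal]

lemma Truthful2.optVal_lieVal_eq_zero {A : (Fin 2 → Fin 2 → NNReal) → Fin 2 → Option (Fin 2)}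
    (hA : Truthful2 A) {ε : NNReal} (hε : 0 < ε) {i : Fin 2}
    (hi : A (fun _ => trueVal ε) i = some 1) :
    optVal (lieVal ε) (A (Function.update (fun _ => trueVal ε) i (lieVal ε)) i) = 0 := by
  have h := hA i (fun _ => trueVal ε) (trueVal ε) (lieVal ε) (optVal_lieVal_le_trueVal ε _)
  rw [Function.update_eq_self_iff.2 rfl, hi] at h
  exact optVal_lieVal_eq_zero_of_le_one hε h

theorem no_deterministic_better_than_two :
    ¬ ∃ (A : (Fin 2 → Fin 2 → NNReal) → Fin 2 → Option (Fin 2)) (δ : ℝ),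
      0 < δ ∧
      -- feasibility: distinct bidders never receive the same good
      (∀ bs (i j : Fin 2), i ≠ j → A bs i ≠ none → A bs i ≠ A bs j) ∧
      Truthful2 A ∧
      -- approximation ratio 2 - δ (better than 2):
      (∀ (bs : Fin 2 → Fin 2 → NNReal) (B : Fin 2 → Option (Fin 2)),
        (∀ i j, i ≠ j → B i ≠ none → B i ≠ B j) →
        ((∑ i, optVal (bs i) (B i) : NNReal) : ℝ) ≤
          (2 - δ) * ((∑ i, optVal (bs i) (A bs i) : NNReal) : ℝ)) := by
  rintro ⟨A, δ, hδ, hfeas, htruth, happrox⟩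
  lift δ to NNReal using hδ.le
  replace hδ : 0 < δ := by exact_mod_cast hδ
  replace happrox : Approximates A (2 - δ) := happrox
  rcases Feasible.exists_eq_none_or_eq_some_one (hfeas (fun _ => trueVal δ)) with
    ⟨i, hi⟩ | ⟨i, hi⟩
  · refine (happrox.one_add_lt_welfare (bs := fun _ => trueVal δ) hδ i rfl
      fun _ _ => rfl).not_ge ?_
    exact welfare_le_of_optVal_eq_zero i (by rw [hi]; rfl) fun _ => trueVal_le δ
  · set bs := Function.update (fun _ => trueVal δ) i (lieVal δ) with hbs
    have hbs_le : ∀ k g, bs k g ≤ 1 + δ :=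
      (Function.forall_update_iff _ fun _ (v : Fin 2 → NNReal) => ∀ g, v g ≤ 1 + δ).2
        ⟨lieVal_le δ, fun _ _ => trueVal_le δ⟩
    refine (happrox.one_add_lt_welfare (bs := bs) hδ i (by simp [hbs, lieVal])
      fun j hj => by simp [hbs, hj, trueVal]).not_ge ?_
    refine welfare_le_of_optVal_eq_zero i ?_ hbs_le
    rw [hbs, Function.update_self]
    exact htruth.optVal_lieVal_eq_zero hδ hi
end

section
/- No universally truthful randomized mechanism without money with verification for combinatorial auctions with known 2-minded bidders achieves approximation ratio better than 5/4, even with n = 2 bidders and m = 2 goods. -/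
/-!
Yao's principle on two instances.  Let bidder 2 value `{a}` at `1` and bidder 1 value `{a,b}`
at `2`, and `{b}` either at `0` (instance `I`) or at `y = 2 - ε` (instance `I'`).  A truthful
deterministic mechanism that gives `{a,b}` to bidder 1 in `I` must do so in `I'` as well
(otherwise bidder 1 of type `I'` gains by reporting `I`), so its welfare on the pair is
`2 + 2 = 4`; if it does not, it earns at most `1 + 3 = 4`.  Hence every mixture has total
expected welfare at most `4` on the pair, while the optima sum to `5 - ε`.
-/

/-
Encoding: goods `{a,b}`; bidder 1 publicly demands `{a,b}` and `{b}` (declaration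
`(x,y)`, with monotone valuation `max x y` for `{a,b}` and `y` for `{b}`);
bidder 2 is single-minded on `{a}` (declaration `w`).  An outcome is a pair
`(o₁, o₂)` where `o₁ : Option Bool` is bidder 1's award (`some true = {a,b}`,
`some false = {b}`, `none` = nothing) and `o₂ : Bool` tells whether bidder 2
gets `{a}`; feasibility: if bidder 1 gets `{a,b}` then bidder 2 gets nothing.
-/

open scoped BigOperators

abbrev Inp : Type := (NNReal × NNReal) × NNReal
abbrev Out : Type := Option Bool × Bool

def val1 (p : NNReal × NNReal) (o : Option Bool) : NNReal :=
  o.elim 0 fun full => if full then max p.1 p.2 else p.2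

def val2 (w : NNReal) (o : Bool) : NNReal :=
  if o then w else 0

def welf (inp : Inp) (out : Out) : NNReal :=
  val1 inp.1 out.1 + val2 inp.2 out.2

def Feas (M : Inp → Out) : Prop :=
  ∀ inp, (M inp).1 = some true → (M inp).2 = false

/-- Truthfulness without money with verification of a deterministic mechanism,
for each of the two bidders. -/
def TruthfulDet (M : Inp → Out) : Prop :=
  (∀ (w : NNReal) (t z : NNReal × NNReal),
    val1 z (M (z, w)).1 ≤ val1 t (M (z, w)).1 →
    val1 t (M (z, w)).1 ≤ val1 t (M (t, w)).1) ∧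
  (∀ (p : NNReal × NNReal) (t z : NNReal),
    val2 z (M (p, z)).2 ≤ val2 t (M (p, z)).2 →
    val2 t (M (p, z)).2 ≤ val2 t (M (p, t)).2)

theorem val1_le_max (p : NNReal × NNReal) (o : Option Bool) : val1 p o ≤ max p.1 p.2 := by
  rcases o with _ | _ | _ <;> simp [val1]

theorem val2_le (w : NNReal) (o : Bool) : val2 w o ≤ w := by
  cases o <;> simp [val2]

theorem welf_le (inp : Inp) (out : Out) : welf inp out ≤ max inp.1.1 inp.1.2 + inp.2 :=
  add_le_add (val1_le_max _ _) (val2_le _ _)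

/-- When the misreport `(x, 0)` of type `(x, y)` wins `{a,b}`, it does not overstate the value
of what it wins, so verification lets it through; truthfulness then requires the true report to
earn at least `x`, and only `{a,b}` does. -/
theorem TruthfulDet.fst_eq_some_true {M : Inp → Out} (hM : TruthfulDet M) {x y w : NNReal}
    (hyx : y < x) (hfull : (M ((x, 0), w)).1 = some true) :
    (M ((x, y), w)).1 = some true := by
  have hx : x ≤ val1 (x, y) (M ((x, y), w)).1 := by
    simpa [hfull, val1, hyx.le] using hM.1 w (x, y) (x, 0)
  rcases h : (M ((x, y), w)).1 with _ | _ | _ <;> simp only [h, val1] at hx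
  · exact absurd hx (pos_of_gt hyx).not_ge
  · exact absurd hx hyx.not_ge
  · rfl

theorem welf_add_welf_le {M : Inp → Out} (hF : Feas M) (hT : TruthfulDet M) {x y w : NNReal}
    (hyx : y < x) :
    welf ((x, 0), w) (M ((x, 0), w)) + welf ((x, y), w) (M ((x, y), w)) ≤ x + max x (2 * w) := by
  by_cases hfull : (M ((x, 0), w)).1 = some true
  · have hfull' := hT.fst_eq_some_true hyx hfull
    have h₀ : welf ((x, 0), w) (M ((x, 0), w)) = x := by
      simp [welf, hfull, hF _ hfull, val1, val2]
    have h₁ : welf ((x, y), w) (M ((x, y), w)) = x := by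
      simp [welf, hfull', hF _ hfull', val1, val2, hyx.le]
    rw [h₀, h₁]
    gcongr; exact le_max_left _ _
  · have h₀ : welf ((x, 0), w) (M ((x, 0), w)) ≤ w := by
      have : val1 (x, 0) (M ((x, 0), w)).1 = 0 := by
        rcases h : (M ((x, 0), w)).1 with _ | _ | _
        · rfl
        · simp [val1]
        · exact absurd h hfull
      simpa [welf, this] using val2_le w _
    have h₁ := welf_le ((x, y), w) (M ((x, y), w))
    simp only [max_eq_left hyx.le] at h₁
    calc _ ≤ w + (x + w) := add_le_add h₀ h₁
      _ = x + 2 * w := by ring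
      _ ≤ x + max x (2 * w) := by gcongr; exact le_max_right _ _

theorem sum_mul_le_of_le {ι : Type*} [Fintype ι] {p : ι → NNReal} (hp : ∑ i, p i = 1)
    {f : ι → ℝ} {B : ℝ} (hf : ∀ i, f i ≤ B) : ∑ i, (p i : ℝ) * f i ≤ B :=
  calc ∑ i, (p i : ℝ) * f i ≤ ∑ i, (p i : ℝ) * B :=
        Finset.sum_le_sum fun i _ => mul_le_mul_of_nonneg_left (hf i) (p i).coe_nonneg
    _ = B := by rw [← Finset.sum_mul, ← NNReal.coe_sum, hp, NNReal.coe_one, one_mul]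

theorem add_le_mul_of_le_mul {a b c S T B : ℝ} (ha : 0 < a) (hS : 0 ≤ S)
    (haS : a ≤ c * S) (hbT : b ≤ c * T) (hST : S + T ≤ B) : a + b ≤ c * B := by
  have hc : 0 < c := pos_of_mul_pos_left (ha.trans_le haS) hS
  nlinarith

theorem no_universally_truthful_better_than_five_fourths :
    ¬ ∃ (δ : ℝ) (N : ℕ) (M : Fin N → Inp → Out) (prob : Fin N → NNReal),
      0 < δ ∧ (∑ n, prob n) = 1 ∧
      (∀ n, Feas (M n) ∧ TruthfulDet (M n)) ∧
      -- expected approximation ratio better than 5/4: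
      (∀ (inp : Inp) (out : Out), (out.1 = some true → out.2 = false) →
        ((welf inp out : NNReal) : ℝ) ≤
          (5 / 4 - δ) * ∑ n, ((prob n : NNReal) : ℝ) * ((welf inp (M n inp) : NNReal) : ℝ)) := by
  rintro ⟨δ, N, M, prob, hδ, hprob, hM, hratio⟩
  set y : NNReal := Real.toNNReal (2 - 2 * δ)
  have hy_lt : y < 2 := by
    rw [Real.toNNReal_lt_ofNat]; linarith
  have hy_ge : 2 - 2 * δ ≤ y := Real.le_coe_toNNReal _
  have hpair (n : Fin N) :
      (welf ((2, 0), 1) (M n ((2, 0), 1)) : ℝ) + welf ((2, y), 1) (M n ((2, y), 1)) ≤ 4 := by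
    have := welf_add_welf_le (hM n).1 (hM n).2 (w := 1) hy_lt
    norm_num at this
    exact_mod_cast this
  have hexp := sum_mul_le_of_le hprob hpair
  simp only [mul_add, Finset.sum_add_distrib] at hexp
  have hopt := hratio ((2, 0), 1) (some true, false) fun _ => rfl
  have hopt' := hratio ((2, y), 1) (some false, true) nofun
  have hopt_val : welf ((2, 0), 1) (some true, false) = 2 := by simp [welf, val1, val2]
  have hopt_val' : welf ((2, y), 1) (some false, true) = y + 1 := by simp [welf, val1, val2]
  rw [hopt_val] at hopt
  rw [hopt_val'] at hopt'
  have := add_le_mul_of_le_mul (by simp) (Finset.sum_nonneg fun n _ =>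
    mul_nonneg (prob n).coe_nonneg (welf _ _).coe_nonneg) hopt hopt' hexp
  push_cast at this
  linarith
end

section
/- No truthful-in-expectation randomized mechanism without money with verification for combinatorial auctions with known 2-minded bidders achieves approximation ratio at most 1.09, even with n = 2 bidders and m = 2 goods. Formally: let phi = (1+sqrt(5))/2 and rho in [1, 1.09]; there exist no probabilities p, q in [0,1] satisfying simultaneously p >= (phi - rho)/(rho*(phi-1)), 1 - q >= (2 - rho*phi)/(rho*(2-phi)), and q >= (p*phi - 1)/(phi - 1). -/
/-!
Chaining the three constraints eliminates `p` and `q`: multiplying the first by `φ` and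
substituting the third, then using `(φ - 1)² = 2 - φ` to match the second, gives
`φ + 3 ≤ ρ (2φ + 1)`. So every truthful-in-expectation mechanism has ratio at least
`(φ + 3) / (2φ + 1) ≈ 1.0902 > 1.09`.
-/

namespace Real

open scoped goldenRatio

lemma goldenRatio_sub_one_sq : (φ - 1) ^ 2 = 2 - φ := by
  linear_combination goldenRatio_sq

lemma goldenRatio_lt_1_6186 : φ < 1.6186 := by
  have h : √5 < 2.2372 := by
    rw [sqrt_lt' (by norm_num)]
    norm_num
  unfold goldenRatio
  linarith

end Real

section

open Real
open scoped goldenRatio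

lemma goldenRatio_add_three_div_le_of_truthful {ρ p q : ℝ} (hρ : 0 < ρ)
    (hI : (φ - ρ) / (ρ * (φ - 1)) ≤ p)
    (hI' : (2 - ρ * φ) / (ρ * (2 - φ)) ≤ 1 - q)
    (htruthful : (p * φ - 1) / (φ - 1) ≤ q) :
    (φ + 3) / (2 * φ + 1) ≤ ρ := by
  have hφ1 : 0 < φ - 1 := sub_pos.2 one_lt_goldenRatio
  have hI_mul : φ - ρ ≤ p * (ρ * (φ - 1)) := (div_le_iff₀ (by positivity)).1 hI
  have hI'_mul : 2 - ρ * φ ≤ (1 - q) * (ρ * (2 - φ)) :=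
    (div_le_iff₀ (mul_pos hρ (sub_pos.2 goldenRatio_lt_two))).1 hI'
  have htruthful_mul : p * φ - 1 ≤ q * (φ - 1) := (div_le_iff₀ hφ1).1 htruthful
  have key : φ * (φ - ρ) ≤ q * ρ * (2 - φ) + ρ * (φ - 1) :=
    calc φ * (φ - ρ) ≤ φ * (p * (ρ * (φ - 1))) :=
          mul_le_mul_of_nonneg_left hI_mul goldenRatio_pos.le
      _ = (p * φ) * (ρ * (φ - 1)) := by ring
      _ ≤ (q * (φ - 1) + 1) * (ρ * (φ - 1)) := by gcongr; linarith
      _ = q * ρ * (2 - φ) + ρ * (φ - 1) := by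
        rw [← goldenRatio_sub_one_sq]; ring
  rw [div_le_iff₀ (by linarith [goldenRatio_pos])]
  nlinarith [goldenRatio_sq]

lemma lt_goldenRatio_add_three_div : (1.09 : ℝ) < (φ + 3) / (2 * φ + 1) := by
  rw [lt_div_iff₀ (by linarith [goldenRatio_pos])]
  linarith [goldenRatio_lt_1_6186]

end

theorem no_truthful_in_expectation_better_than_109_general
    (φ ρ p q : ℝ)
    (hφ : φ = (1 + Real.sqrt 5) / 2)
    (hρ1 : 1 ≤ ρ) (hρ2 : ρ ≤ 1.09) :
    ¬ ((φ - ρ) / (ρ * (φ - 1)) ≤ p ∧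
       (2 - ρ * φ) / (ρ * (2 - φ)) ≤ 1 - q ∧
       (p * φ - 1) / (φ - 1) ≤ q) := by
  rintro ⟨hI, hI', htruthful⟩
  rw [show φ = Real.goldenRatio from hφ] at hI hI' htruthful
  have := goldenRatio_add_three_div_le_of_truthful (by linarith) hI hI' htruthful
  linarith [lt_goldenRatio_add_three_div]

theorem no_truthful_in_expectation_better_than_109
    (φ ρ p q : ℝ)
    (hφ : φ = (1 + Real.sqrt 5) / 2)
    (hρ1 : 1 ≤ ρ) (hρ2 : ρ ≤ 1.09)
    (hp0 : 0 ≤ p) (hp1 : p ≤ 1) (hq0 : 0 ≤ q) (hq1 : q ≤ 1) :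
    ¬ ((φ - ρ) / (ρ * (φ - 1)) ≤ p ∧
       (2 - ρ * φ) / (ρ * (2 - φ)) ≤ 1 - q ∧
       (p * φ - 1) / (φ - 1) ≤ q) :=
  no_truthful_in_expectation_better_than_109_general φ ρ p q hφ hρ1 hρ2
end
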